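/- (Drawdown Modulation Lemma.) Let (X_k)_{k≥0} be an i.i.d. sequence of real random variables on a probability space with common law μ such that μ([X_min, X_max]) = 1 and both X_min and X_max lie in the topological support of μ, where −1 < X_min < 0 < X_max. Let the investment process I(k) be measurable with respect to σ(X_0, …, X_{k−1}), let V(0) > 0 be a constant, and define V(k+1) = V(k) + I(k)·X_k, V_max(k) = max_{0 ≤ i ≤ k} V(i), and d(k) = (V_max(k) − V(k))/V_max(k). Then for d_max ∈ (0,1): almost surely d(k) ≤ d_max for all k = 0, 1, …, N if and only if almost surely, for all k < N, −((d_max − d(k))/((1 − d(k))·X_max))·V(k) ≤ I(k) ≤ ((d_max − d(k))/((1 − d(k))·|X_min|))·V(k). -/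

import Mathlib

/-!
Write `L k = (1 - dmax) * runMax V k` for the floor below which `V` may not fall. Then
`d (k + 1) ≤ dmax` is equivalent to `L k ≤ V k + I k * X k`, and once `d k ≤ dmax` the two
modulation bounds say exactly that this holds with `X k` replaced by `Xmax` and by `Xmin`.
Since the step is affine in `X k`, the endpoint inequalities give it on all of `[Xmin, Xmax]`,
and the drawdown bound follows by induction.

Conversely, `L k - V k` and `I k` are functions of the past, which is independent of `X k`.
If the inequality failed at an endpoint `y` with positive probability, it would fail by a
uniform margin on a past event of positive probability; on that event it then also fails for
`X k` close enough to `y`, which by independence and since `y` lies in the support of the law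
of `X k` happens with positive probability.
-/

open MeasureTheory ProbabilityTheory

/-- Running maximum `V_max(k) = max_{0 ≤ i ≤ k} V(i)` of the account value. -/
noncomputable def runMax (V : ℕ → ℝ) (k : ℕ) : ℝ :=
  (Finset.range (k + 1)).sup' Finset.nonempty_range_add_one V

/-- Percentage drawdown `d(k) = (V_max(k) - V(k)) / V_max(k)`. -/
noncomputable def drawdown (V : ℕ → ℝ) (k : ℕ) : ℝ :=
  (runMax V k - V k) / runMax V k

section Deterministic

lemma le_mul_of_mem_Icc {a b x₁ x₂ x : ℝ} (h₁ : a ≤ b * x₁) (h₂ : a ≤ b * x₂)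
    (hx : x ∈ Set.Icc x₁ x₂) : a ≤ b * x := by
  rcases le_total 0 b with hb | hb
  · exact h₁.trans (mul_le_mul_of_nonneg_left hx.1 hb)
  · exact h₂.trans (mul_le_mul_of_nonpos_left hx.2 hb)

variable {V : ℕ → ℝ} {k : ℕ} {d : ℝ}

lemma le_runMax (V : ℕ → ℝ) {i k : ℕ} (h : i ≤ k) : V i ≤ runMax V k :=
  Finset.le_sup' V (Finset.mem_range_succ_iff.2 h)

lemma runMax_zero (V : ℕ → ℝ) : runMax V 0 = V 0 := by
  simp [runMax]

lemma runMax_succ (V : ℕ → ℝ) (k : ℕ) : runMax V (k + 1) = max (V (k + 1)) (runMax V k) := by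
  rw [runMax, Finset.sup'_congr _ Finset.range_add_one fun _ _ => rfl, Finset.sup'_insert]
  rfl

lemma runMax_pos (hV : 0 < V 0) (k : ℕ) : 0 < runMax V k :=
  hV.trans_le (le_runMax V k.zero_le)

lemma drawdown_zero (V : ℕ → ℝ) : drawdown V 0 = 0 := by
  simp [drawdown, runMax_zero]

lemma drawdown_le_iff (hW : 0 < runMax V k) :
    drawdown V k ≤ d ↔ (1 - d) * runMax V k ≤ V k := by
  rw [drawdown, div_le_iff₀ hW]
  constructor <;> intro h <;> linarith

lemma drawdown_succ_le_iff (hW : 0 < runMax V k) (hd₀ : 0 ≤ d) (hd₁ : d ≤ 1) :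
    drawdown V (k + 1) ≤ d ↔ (1 - d) * runMax V k ≤ V (k + 1) := by
  have hW' : 0 < runMax V (k + 1) := hW.trans_le (runMax_succ V k ▸ le_max_right _ _)
  rw [drawdown_le_iff hW', runMax_succ]
  constructor
  · intro h
    exact (mul_le_mul_of_nonneg_left (le_max_right _ _) (by linarith)).trans h
  · intro h
    have hV : 0 ≤ V (k + 1) := (mul_nonneg (by linarith) hW.le).trans h
    rcases max_cases (V (k + 1)) (runMax V k) with ⟨hmax, -⟩ | ⟨hmax, -⟩ <;> rw [hmax]
    · nlinarith
    · exact h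

lemma modulation_bound_eq (hW : 0 < runMax V k) (hV : 0 < V k) (x : ℝ) :
    (d - drawdown V k) / ((1 - drawdown V k) * x) * V k = (V k - (1 - d) * runMax V k) / x := by
  have h : 1 - drawdown V k = V k / runMax V k := by
    rw [drawdown]; field_simp; ring
  rw [h]
  by_cases hx : x = 0
  · simp [hx]
  · rw [drawdown]; field_simp; ring

lemma modulation_iff (hW : 0 < runMax V k) (hdk : drawdown V k ≤ d) (hd : d < 1)
    {xmin xmax i : ℝ} (hxmin : xmin < 0) (hxmax : 0 < xmax) :
    (-((d - drawdown V k) / ((1 - drawdown V k) * xmax)) * V k ≤ i ∧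
        i ≤ (d - drawdown V k) / ((1 - drawdown V k) * |xmin|) * V k) ↔
      ((1 - d) * runMax V k - V k ≤ i * xmax ∧ (1 - d) * runMax V k - V k ≤ i * xmin) := by
  have hV : 0 < V k := (mul_pos (sub_pos.2 hd) hW).trans_le ((drawdown_le_iff hW).1 hdk)
  rw [neg_mul, modulation_bound_eq hW hV, modulation_bound_eq hW hV, abs_of_neg hxmin, neg_le,
    le_div_iff₀ hxmax, le_div_iff₀ (neg_pos.2 hxmin)]
  constructor <;> rintro ⟨h₁, h₂⟩ <;> constructor <;> linarith

end Deterministic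

section Trajectory

variable {V I x : ℕ → ℝ} {xmin xmax d : ℝ} {N : ℕ}

lemma drawdown_le_of_modulation (hrec : ∀ k, V (k + 1) = V k + I k * x k) (hV0 : 0 < V 0)
    (hxmin : xmin < 0) (hxmax : 0 < xmax) (hd₀ : 0 ≤ d) (hd₁ : d < 1)
    (hx : ∀ k < N, x k ∈ Set.Icc xmin xmax)
    (hmod : ∀ k < N,
      -((d - drawdown V k) / ((1 - drawdown V k) * xmax)) * V k ≤ I k ∧
        I k ≤ (d - drawdown V k) / ((1 - drawdown V k) * |xmin|) * V k) :
    ∀ k ≤ N, drawdown V k ≤ d := by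
  intro k
  induction k with
  | zero => exact fun _ => (drawdown_zero V).trans_le hd₀
  | succ k ih =>
    intro hk
    have hW := runMax_pos hV0 k
    obtain ⟨hmax, hmin⟩ := (modulation_iff hW (ih (by omega)) hd₁ hxmin hxmax).1 (hmod k hk)
    rw [drawdown_succ_le_iff hW hd₀ hd₁.le, hrec]
    linarith [le_mul_of_mem_Icc hmin hmax (hx k hk)]

lemma sub_le_mul_of_drawdown_le (hrec : ∀ k, V (k + 1) = V k + I k * x k) (hV0 : 0 < V 0)
    (hd₀ : 0 ≤ d) (hd₁ : d ≤ 1) (h : ∀ k ≤ N, drawdown V k ≤ d) :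
    ∀ k < N, (1 - d) * runMax V k - V k ≤ I k * x k := by
  intro k hk
  have hstep := (drawdown_succ_le_iff (runMax_pos hV0 k) hd₀ hd₁).1 (h (k + 1) hk)
  rw [hrec] at hstep
  linarith

end Trajectory

theorem ae_le_mul_of_indep {Ω : Type*} {m mΩ : MeasurableSpace Ω} {P : Measure Ω}
    {A B Y : Ω → ℝ} (hind : Indep m (MeasurableSpace.comap Y inferInstance) P)
    (hA : Measurable[m] A) (hB : Measurable[m] B) (hY : Measurable Y) {y : ℝ}
    (hy : ∀ U : Set ℝ, IsOpen U → y ∈ U → 0 < P.map Y U) (h : ∀ᵐ ω ∂P, A ω ≤ B ω * Y ω) :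
    ∀ᵐ ω ∂P, A ω ≤ B ω * y := by
  -- On `E n` the inequality fails at every point within `1 / (n + 1)` of `y`.
  set E : ℕ → Set Ω := fun n => {ω | B ω * y + |B ω| / (n + 1) < A ω}
  have hcover : {ω | ¬ A ω ≤ B ω * y} ⊆ ⋃ n, E n := by
    intro ω hω
    have hpos : 0 < A ω - B ω * y := sub_pos.2 (not_le.1 hω)
    obtain ⟨n, hn⟩ := exists_nat_gt (|B ω| / (A ω - B ω * y))
    rw [div_lt_iff₀ hpos] at hn
    have hmargin : |B ω| / (n + 1) < A ω - B ω * y := by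
      rw [div_lt_iff₀ (by positivity)]
      linarith
    exact Set.mem_iUnion.2 ⟨n, by simp only [E, Set.mem_ofPred_eq]; linarith⟩
  have hnull : ∀ n, P (E n) = 0 := by
    intro n
    set U := Metric.ball y (1 / (n + 1))
    have hE : MeasurableSet[m] (E n) :=
      ((hB.mul_const y).add ((continuous_abs.measurable.comp hB).div_const _)).prodMk hA
        measurableSet_lt'
    have hsub : E n ∩ Y ⁻¹' U ⊆ {ω | ¬ A ω ≤ B ω * Y ω} := by
      rintro ω ⟨hωE, hωU⟩
      have hdist : |Y ω - y| < 1 / (n + 1) := hωU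
      have hdev : B ω * (Y ω - y) ≤ |B ω| / (n + 1) := calc
        B ω * (Y ω - y) ≤ |B ω| * |Y ω - y| := (le_abs_self _).trans (abs_mul _ _).le
        _ ≤ |B ω| * (1 / (n + 1)) := mul_le_mul_of_nonneg_left hdist.le (abs_nonneg _)
        _ = |B ω| / (n + 1) := mul_one_div _ _
      simp only [E, Set.mem_ofPred_eq] at hωE
      simp only [Set.mem_ofPred_eq, not_le]
      linarith
    have hprod := (Indep_iff _ _ _).1 hind (E n) (Y ⁻¹' U) hE ⟨U, measurableSet_ball, rfl⟩
    rw [measure_mono_null hsub (ae_iff.1 h)] at hprod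
    have hU : 0 < P (Y ⁻¹' U) := by
      rw [← Measure.map_apply (s := U) hY measurableSet_ball]
      exact hy U Metric.isOpen_ball (Metric.mem_ball_self (by positivity))
    exact (mul_eq_zero.1 hprod.symm).resolve_right hU.ne'
  exact ae_iff.2 (measure_mono_null hcover (measure_iUnion_null hnull))

lemma measurable_runMax {Ω : Type*} {m : MeasurableSpace Ω} {V : ℕ → Ω → ℝ} {k : ℕ}
    (hV : ∀ j ≤ k, Measurable (V j)) : Measurable fun ω => runMax (fun n => V n ω) k :=
  Finset.measurable_range_sup'' hV

section Past

variable {Ω β : Type*} [MeasurableSpace β] (X : ℕ → Ω → β)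

abbrev pastMeasurableSpace (k : ℕ) : MeasurableSpace Ω :=
  MeasurableSpace.comap (fun ω (i : Fin k) => X i ω) MeasurableSpace.pi

variable {X}

lemma measurable_past {i k : ℕ} (h : i < k) : Measurable[pastMeasurableSpace X k] (X i) :=
  (measurable_pi_apply (⟨i, h⟩ : Fin k)).comp (comap_measurable fun ω (j : Fin k) => X j ω)

lemma pastMeasurableSpace_le_iff {m : MeasurableSpace Ω} {k : ℕ} :
    pastMeasurableSpace X k ≤ m ↔ ∀ i < k, Measurable[m] (X i) := by
  rw [pastMeasurableSpace, ← measurable_iff_comap_le, measurable_pi_iff]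
  exact ⟨fun h i hi => h ⟨i, hi⟩, fun h i => h i i.2⟩

lemma pastMeasurableSpace_mono : Monotone (pastMeasurableSpace X) := fun _ _ hkl =>
  pastMeasurableSpace_le_iff.2 fun _ hi => measurable_past (hi.trans_le hkl)

lemma indep_pastMeasurableSpace {mΩ : MeasurableSpace Ω} {P : Measure Ω}
    (hX : ∀ i, Measurable (X i)) (hindep : iIndepFun X P) (k : ℕ) :
    Indep (pastMeasurableSpace X k) (MeasurableSpace.comap (X k) inferInstance) P := by
  have h := indep_iSup_of_disjoint (fun i => (hX i).comap_le) hindep.iIndep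
    (S := Set.Iio k) (T := {k}) (by simp)
  simp only [Set.mem_singleton_iff, iSup_iSup_eq_left] at h
  refine indep_of_indep_of_le_left h (pastMeasurableSpace_le_iff.2 fun i hi => ?_)
  exact Measurable.of_comap_le (le_iSup₂ (f := fun j (_ : j ∈ Set.Iio k) =>
    MeasurableSpace.comap (X j) inferInstance) i hi)

lemma measurable_accountValue {X I V : ℕ → Ω → ℝ} (hV0 : Measurable[pastMeasurableSpace X 0] (V 0))
    (hrec : ∀ k ω, V (k + 1) ω = V k ω + I k ω * X k ω)
    (hI : ∀ k, Measurable[pastMeasurableSpace X k] (I k)) :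
    ∀ k, Measurable[pastMeasurableSpace X k] (V k)
  | 0 => hV0
  | k + 1 => by
    have hle := pastMeasurableSpace_mono (X := X) k.le_succ
    rw [show V (k + 1) = fun ω => V k ω + I k ω * X k ω from funext (hrec k)]
    exact ((measurable_accountValue hV0 hrec hI k).mono hle le_rfl).add
      (((hI k).mono hle le_rfl).mul (measurable_past k.lt_succ_self))

end Past

theorem drawdown_modulation_lemma_general
    {Ω : Type*} [MeasurableSpace Ω] (P : Measure Ω)
    (X : ℕ → Ω → ℝ) (μ : Measure ℝ) [IsProbabilityMeasure μ]
    (Xmin Xmax dmax : ℝ)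
    (hXmin0 : Xmin < 0) (hXmax : 0 < Xmax)
    (hdmax0 : 0 < dmax) (hdmax1 : dmax < 1)
    (hmeas : ∀ k, Measurable (X k))
    (hindep : iIndepFun X P)
    (hlaw : ∀ k, Measure.map (X k) P = μ)
    (hbox : μ (Set.Icc Xmin Xmax) = 1)
    -- `Xmin` and `Xmax` lie in the topological support of `μ`:
    (hsuppmin : ∀ U : Set ℝ, IsOpen U → Xmin ∈ U → 0 < μ U)
    (hsuppmax : ∀ U : Set ℝ, IsOpen U → Xmax ∈ U → 0 < μ U)
    (I : ℕ → Ω → ℝ)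
    -- `I k` is measurable w.r.t. `σ(X_0, …, X_{k-1})`:
    (hadapted : ∀ k, Measurable[MeasurableSpace.comap
        (fun ω => (fun i : Fin k => X i ω)) MeasurableSpace.pi] (I k))
    (v0 : ℝ) (hv0 : 0 < v0)
    (V : ℕ → Ω → ℝ)
    (hV0 : ∀ ω, V 0 ω = v0)
    (hrec : ∀ k ω, V (k + 1) ω = V k ω + I k ω * X k ω)
    (N : ℕ) :
    (∀ᵐ ω ∂P, ∀ k ≤ N, drawdown (fun n => V n ω) k ≤ dmax) ↔
    (∀ᵐ ω ∂P, ∀ k < N,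
      -((dmax - drawdown (fun n => V n ω) k) /
          ((1 - drawdown (fun n => V n ω) k) * Xmax)) * V k ω ≤ I k ω ∧
      I k ω ≤ ((dmax - drawdown (fun n => V n ω) k) /
          ((1 - drawdown (fun n => V n ω) k) * |Xmin|)) * V k ω) := by
  have hV0pos : ∀ ω, 0 < V 0 ω := fun ω => hV0 ω ▸ hv0
  have hV := measurable_accountValue (by rw [funext hV0]; exact measurable_const) hrec hadapted
  constructor
  · intro h
    have hfloor : ∀ k < N, ∀ y, (∀ U : Set ℝ, IsOpen U → y ∈ U → 0 < μ U) →
        ∀ᵐ ω ∂P, (1 - dmax) * runMax (fun n => V n ω) k - V k ω ≤ I k ω * y := by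
      intro k hk y hy
      refine ae_le_mul_of_indep (indep_pastMeasurableSpace hmeas hindep k) ?_ (hadapted k)
        (hmeas k) (hlaw k ▸ hy) (h.mono fun ω hω => ?_)
      · exact ((measurable_runMax fun j hj =>
          (hV j).mono (pastMeasurableSpace_mono hj) le_rfl).const_mul (1 - dmax)).sub (hV k)
      · exact sub_le_mul_of_drawdown_le (hrec · ω) (hV0pos ω) hdmax0.le hdmax1.le hω k hk
    have hends : ∀ᵐ ω ∂P, ∀ k < N,
        (1 - dmax) * runMax (fun n => V n ω) k - V k ω ≤ I k ω * Xmax ∧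
          (1 - dmax) * runMax (fun n => V n ω) k - V k ω ≤ I k ω * Xmin :=
      ae_all_iff.2 fun k => Filter.eventually_imp_distrib_left.2 fun hk =>
        (hfloor k hk Xmax hsuppmax).and (hfloor k hk Xmin hsuppmin)
    filter_upwards [h, hends] with ω hdrawdown hend k hk
    exact (modulation_iff (runMax_pos (hV0pos ω) k) (hdrawdown k hk.le) hdmax1 hXmin0 hXmax).2
      (hend k hk)
  · intro h
    have hbox' : ∀ᵐ ω ∂P, ∀ k, X k ω ∈ Set.Icc Xmin Xmax := ae_all_iff.2 fun k =>
      ae_of_ae_map (hmeas k).aemeasurable <| hlaw k ▸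
        (ae_iff_measure_eq measurableSet_Icc.nullMeasurableSet).2 (hbox.trans measure_univ.symm)
    filter_upwards [h, hbox'] with ω hmod hX
    exact drawdown_le_of_modulation (hrec · ω) (hV0pos ω) hXmin0 hXmax hdmax0.le hdmax1
      (fun k _ => hX k) hmod

/-- Drawdown Modulation Lemma: almost surely the drawdown stays below `dmax` up to
stage `N` if and only if almost surely the investment satisfies the modulation
condition at every stage `k < N`. -/
theorem drawdown_modulation_lemma
    {Ω : Type*} [MeasurableSpace Ω] (P : Measure Ω) [IsProbabilityMeasure P]
    (X : ℕ → Ω → ℝ) (μ : Measure ℝ) [IsProbabilityMeasure μ]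
    (Xmin Xmax dmax : ℝ)
    (hXmin1 : -1 < Xmin) (hXmin0 : Xmin < 0) (hXmax : 0 < Xmax)
    (hdmax0 : 0 < dmax) (hdmax1 : dmax < 1)
    (hmeas : ∀ k, Measurable (X k))
    (hindep : iIndepFun X P)
    (hlaw : ∀ k, Measure.map (X k) P = μ)
    (hbox : μ (Set.Icc Xmin Xmax) = 1)
    -- `Xmin` and `Xmax` lie in the topological support of `μ`:
    (hsuppmin : ∀ U : Set ℝ, IsOpen U → Xmin ∈ U → 0 < μ U)
    (hsuppmax : ∀ U : Set ℝ, IsOpen U → Xmax ∈ U → 0 < μ U)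
    (I : ℕ → Ω → ℝ)
    -- `I k` is measurable w.r.t. `σ(X_0, …, X_{k-1})`:
    (hadapted : ∀ k, Measurable[MeasurableSpace.comap
        (fun ω => (fun i : Fin k => X i ω)) MeasurableSpace.pi] (I k))
    (v0 : ℝ) (hv0 : 0 < v0)
    (V : ℕ → Ω → ℝ)
    (hV0 : ∀ ω, V 0 ω = v0)
    (hrec : ∀ k ω, V (k + 1) ω = V k ω + I k ω * X k ω)
    (N : ℕ) :
    (∀ᵐ ω ∂P, ∀ k ≤ N, drawdown (fun n => V n ω) k ≤ dmax) ↔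
    (∀ᵐ ω ∂P, ∀ k < N,
      -((dmax - drawdown (fun n => V n ω) k) /
          ((1 - drawdown (fun n => V n ω) k) * Xmax)) * V k ω ≤ I k ω ∧
      I k ω ≤ ((dmax - drawdown (fun n => V n ω) k) /
          ((1 - drawdown (fun n => V n ω) k) * |Xmin|)) * V k ω) :=
  drawdown_modulation_lemma_general P X μ Xmin Xmax dmax hXmin0 hXmax hdmax0 hdmax1 hmeas hindep
    hlaw hbox hsuppmin hsuppmax I hadapted v0 hv0 V hV0 hrec N
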